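/- arXiv:1910.12653 — 3 statements merged into one kernel-verified Lean document; each statement's English description precedes it below -/
import Mathlib

section
/- Let A = U†[a]U be a Hermitian n×n matrix with U unitary and eigenvalues a₁ ≥ … ≥ aₙ, and let a' be obtained from a by replacing all negative entries with 0. Then U†[a']U is a positive semidefinite matrix minimizing the Frobenius distance to A among all Hermitian positive semidefinite matrices: for every positive semidefinite Hermitian X, ‖A − U†[a']U‖_F ≤ ‖A − X‖_F. -/
open Matrix
open scoped ComplexOrder

/-! Conjugation by `U` is a Frobenius isometry, so both distances may be measured after
diagonalising `A`. For a diagonal real matrix `[a]` and a PSD `Y`, dropping the off-diagonal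
entries of `[a] - Y` only decreases the norm, and each remaining diagonal term
`|aⱼ - Yⱼⱼ|²` with `Yⱼⱼ ≥ 0` is at least `min(aⱼ, 0)²`, which is exactly the corresponding
entry of `[a] - [a']`. -/

noncomputable def frobSq {n : ℕ} (A : Matrix (Fin n) (Fin n) ℂ) : ℝ :=
  ((Aᴴ * A).trace).re

lemma frobSq_eq_sum_normSq {n : ℕ} (M : Matrix (Fin n) (Fin n) ℂ) :
    frobSq M = ∑ j, ∑ i, Complex.normSq (M i j) := by
  simp [frobSq, trace, diag, mul_apply, conjTranspose_apply, Complex.normSq_apply,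
    Complex.mul_re, Complex.re_sum]

lemma frobSq_unitary_conj {n : ℕ} {U : Matrix (Fin n) (Fin n) ℂ}
    (hU : U ∈ unitaryGroup (Fin n) ℂ) (M : Matrix (Fin n) (Fin n) ℂ) :
    frobSq (Uᴴ * M * U) = frobSq M := by
  have hUUh : U * Uᴴ = 1 := hU.2
  have key : (Uᴴ * M * U)ᴴ * (Uᴴ * M * U) = Uᴴ * (Mᴴ * M) * U := by
    simp only [conjTranspose_mul, conjTranspose_conjTranspose, Matrix.mul_assoc]
    rw [← Matrix.mul_assoc U, hUUh, Matrix.one_mul]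
  rw [frobSq, key, trace_mul_comm, ← Matrix.mul_assoc, hUUh, Matrix.one_mul, frobSq]

lemma frobSq_diagonal {n : ℕ} (d : Fin n → ℂ) :
    frobSq (diagonal d) = ∑ j, Complex.normSq (d j) := by
  rw [frobSq_eq_sum_normSq]
  refine Finset.sum_congr rfl fun j _ => ?_
  rw [Finset.sum_eq_single j (fun i _ hij => by simp [diagonal_apply_ne _ hij]) (by simp),
    diagonal_apply_eq]

lemma sum_normSq_diag_le_frobSq {n : ℕ} (M : Matrix (Fin n) (Fin n) ℂ) :
    ∑ j, Complex.normSq (M j j) ≤ frobSq M := by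
  rw [frobSq_eq_sum_normSq]
  exact Finset.sum_le_sum fun j _ =>
    Finset.single_le_sum (f := fun i => Complex.normSq (M i j))
      (fun i _ => Complex.normSq_nonneg _) (Finset.mem_univ j)

lemma sq_min_zero_le_normSq_sub {a : ℝ} {y : ℂ} (hy : 0 ≤ y) :
    min a 0 ^ 2 ≤ Complex.normSq (a - y) := by
  obtain ⟨hre, him⟩ := Complex.nonneg_iff.mp hy
  have hns : Complex.normSq (a - y) = (a - y.re) ^ 2 := by
    simp [Complex.normSq_apply, ← him, sq]
  rw [hns]
  rcases le_total a 0 with h | h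
  · rw [min_eq_left h]
    nlinarith
  · rw [min_eq_right h, zero_pow two_ne_zero]
    exact sq_nonneg _

lemma frobSq_diagonal_min_zero_le {n : ℕ} (a : Fin n → ℝ) {Y : Matrix (Fin n) (Fin n) ℂ}
    (hY : Y.PosSemidef) :
    frobSq (diagonal fun i => ((min (a i) 0 : ℝ) : ℂ)) ≤
      frobSq (diagonal (fun i => (a i : ℂ)) - Y) :=
  calc frobSq (diagonal fun i => ((min (a i) 0 : ℝ) : ℂ))
      = ∑ j, min (a j) 0 ^ 2 := by
        simp only [frobSq_diagonal, Complex.normSq_ofReal, sq]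
    _ ≤ ∑ j, Complex.normSq ((diagonal (fun i => (a i : ℂ)) - Y) j j) :=
        Finset.sum_le_sum fun j _ => by
          simpa using sq_min_zero_le_normSq_sub (a := a j) hY.diag_nonneg
    _ ≤ frobSq (diagonal (fun i => (a i : ℂ)) - Y) := sum_normSq_diag_le_frobSq _

lemma diagonal_sub_diagonal_max_zero {n : ℕ} (a : Fin n → ℝ) :
    diagonal (fun i => (a i : ℂ)) - diagonal (fun i => ((max (a i) 0 : ℝ) : ℂ)) =
      diagonal fun i => ((min (a i) 0 : ℝ) : ℂ) := by
  rw [diagonal_sub]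
  congr 1
  funext i
  rw [← Complex.ofReal_sub]
  congr 1
  linarith [min_add_max (a i) 0]

theorem cloude_filter_optimal_general {n : ℕ} (U : Matrix (Fin n) (Fin n) ℂ)
    (hU : U ∈ Matrix.unitaryGroup (Fin n) ℂ) (a : Fin n → ℝ)
    (A : Matrix (Fin n) (Fin n) ℂ)
    (hA : A = Uᴴ * Matrix.diagonal (fun i => (a i : ℂ)) * U) :
    (Uᴴ * Matrix.diagonal (fun i => ((max (a i) 0 : ℝ) : ℂ)) * U).PosSemidef ∧
    ∀ X : Matrix (Fin n) (Fin n) ℂ, X.PosSemidef →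
      frobSq (A - Uᴴ * Matrix.diagonal (fun i => ((max (a i) 0 : ℝ) : ℂ)) * U) ≤ frobSq (A - X) := by
  refine ⟨?_, fun X hX => ?_⟩
  · have hdiag : (diagonal fun i => ((max (a i) 0 : ℝ) : ℂ)).PosSemidef :=
      posSemidef_diagonal_iff.mpr fun i => Complex.zero_le_real.mpr (le_max_right _ _)
    simpa only [conjTranspose_conjTranspose] using hdiag.conjTranspose_mul_mul_same U
  · have hUhU : Uᴴ * U = 1 := hU.1
    have hX_eq : X = Uᴴ * (U * X * Uᴴ) * U := by
      simp only [← Matrix.mul_assoc, hUhU, Matrix.one_mul]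
      rw [Matrix.mul_assoc, hUhU, Matrix.mul_one]
    calc frobSq (A - Uᴴ * diagonal (fun i => ((max (a i) 0 : ℝ) : ℂ)) * U)
        = frobSq (diagonal fun i => ((min (a i) 0 : ℝ) : ℂ)) := by
          rw [hA, ← Matrix.sub_mul, ← Matrix.mul_sub, diagonal_sub_diagonal_max_zero,
            frobSq_unitary_conj hU]
      _ ≤ frobSq (diagonal (fun i => (a i : ℂ)) - U * X * Uᴴ) :=
          frobSq_diagonal_min_zero_le a (hX.mul_mul_conjTranspose_same U)
      _ = frobSq (A - X) := by
          rw [hA, hX_eq, ← Matrix.sub_mul, ← Matrix.mul_sub, frobSq_unitary_conj hU, ← hX_eq]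

/-- optimality of the Cloude eigenvalue-truncation filter: replacing the
negative eigenvalues of a Hermitian matrix `A = Uᴴ[a]U` by `0` yields the PSD matrix
nearest to `A` in Frobenius norm. -/
theorem cloude_filter_optimal {n : ℕ} (U : Matrix (Fin n) (Fin n) ℂ)
    (hU : U ∈ Matrix.unitaryGroup (Fin n) ℂ) (a : Fin n → ℝ) (ha : Antitone a)
    (A : Matrix (Fin n) (Fin n) ℂ)
    (hA : A = Uᴴ * Matrix.diagonal (fun i => (a i : ℂ)) * U) :
    (Uᴴ * Matrix.diagonal (fun i => ((max (a i) 0 : ℝ) : ℂ)) * U).PosSemidef ∧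
    ∀ X : Matrix (Fin n) (Fin n) ℂ, X.PosSemidef →
      frobSq (A - Uᴴ * Matrix.diagonal (fun i => ((max (a i) 0 : ℝ) : ℂ)) * U) ≤ frobSq (A - X) :=
  cloude_filter_optimal_general U hU a A hA
end

section
/- Let A = U†[a]U be a Hermitian 4×4 matrix with eigenvalues a₁ ≥ a₂ ≥ a₃ ≥ a₄ ≥ 0. Set c = (a₂+a₃+a₄)/3 and b = (a₁, c, c, c). Then U†[b]U minimizes the Frobenius distance to A among all Hermitian matrices of the form V†[d]V with V unitary and d = (d₁, d₂, d₂, d₂), d₁ ≥ d₂ ≥ 0. -/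
open Matrix
open scoped ComplexOrder

namespace Matrix

variable {ι : Type*} [Fintype ι] [DecidableEq ι]

theorem map_normSq_mem_doublyStochastic {W : Matrix ι ι ℂ} (hW : W ∈ unitaryGroup ι ℂ) :
    W.map Complex.normSq ∈ doublyStochastic ℝ ι := by
  have hrow (i : ι) : ∑ j, Complex.normSq (W i j) = 1 := by
    have h := congr_arg (fun M => (M i i).re) (mem_unitaryGroup_iff.mp hW)
    simpa [mul_apply, Complex.mul_conj, Complex.re_sum] using h
  have hcol (j : ι) : ∑ i, Complex.normSq (W i j) = 1 := by
    have h := congr_arg (fun M => (M j j).re) (mem_unitaryGroup_iff'.mp hW)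
    simpa [mul_apply, ← Complex.normSq_eq_conj_mul_self, Complex.re_sum] using h
  exact mem_doublyStochastic_iff_sum.mpr ⟨fun i j => Complex.normSq_nonneg _, hrow, hcol⟩

theorem sum_sum_mul_ite_mul_le_of_mem_doublyStochastic {M : Matrix ι ι ℝ}
    (hM : M ∈ doublyStochastic ℝ ι) {a : ι → ℝ} {i₀ : ι} (ha : ∀ i, a i ≤ a i₀)
    {d₁ d₂ : ℝ} (hd : d₂ ≤ d₁) :
    ∑ i, ∑ j, a i * (if j = i₀ then d₁ else d₂) * M i j
      ≤ ∑ i, a i * (if i = i₀ then d₁ else d₂) := by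
  have hsplit (i : ι) : ∑ j, a i * (if j = i₀ then d₁ else d₂) * M i j
      = d₂ * a i + (d₁ - d₂) * (a i * M i i₀) := by
    have hcoef (j : ι) : a i * (if j = i₀ then d₁ else d₂) * M i j
        = d₂ * a i * M i j + (d₁ - d₂) * (if j = i₀ then a i * M i j else 0) := by
      split_ifs <;> ring
    simp only [hcoef, Finset.sum_add_distrib, ← Finset.mul_sum, Finset.sum_ite_eq',
      Finset.mem_univ, if_true, sum_row_of_mem_doublyStochastic hM]
    ring
  have hdiag (i : ι) : a i * (if i = i₀ then d₁ else d₂)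
      = d₂ * a i + (d₁ - d₂) * (if i = i₀ then a i else 0) := by
    split_ifs <;> ring
  have havg : ∑ i, a i * M i i₀ ≤ a i₀ := calc
    ∑ i, a i * M i i₀ ≤ ∑ i, a i₀ * M i i₀ :=
      Finset.sum_le_sum fun i _ =>
        mul_le_mul_of_nonneg_right (ha i) (nonneg_of_mem_doublyStochastic hM)
    _ = a i₀ := by rw [← Finset.mul_sum, sum_col_of_mem_doublyStochastic hM, mul_one]
  simp only [hsplit, hdiag, Finset.sum_add_distrib, ← Finset.mul_sum, Finset.sum_ite_eq',
    Finset.mem_univ, if_true]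
  gcongr

theorem re_trace_diagonal_mul_mul_diagonal_mul_conjTranspose (W : Matrix ι ι ℂ) (e f : ι → ℝ) :
    (diagonal (fun i => (e i : ℂ)) * W * diagonal (fun j => (f j : ℂ)) * Wᴴ).trace.re
      = ∑ i, ∑ j, e i * f j * Complex.normSq (W i j) := by
  rw [Matrix.mul_assoc, trace, Complex.re_sum]
  refine Finset.sum_congr rfl fun i _ => ?_
  rw [diag_apply, mul_apply, Complex.re_sum]
  refine Finset.sum_congr rfl fun j _ => ?_
  have hterm : (e i : ℂ) * W i j * ((f j : ℂ) * star (W i j))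
      = ((e i * f j : ℝ) : ℂ) * (W i j * star (W i j)) := by
    push_cast; ring
  rw [diagonal_mul, diagonal_mul, conjTranspose_apply, hterm, Complex.star_def, Complex.mul_conj,
    ← Complex.ofReal_mul, Complex.ofReal_re]

theorem re_trace_conj_diagonal_mul_conj_diagonal (U V : Matrix ι ι ℂ) (e f : ι → ℝ) :
    ((Uᴴ * diagonal (fun i => (e i : ℂ)) * U) * (Vᴴ * diagonal (fun j => (f j : ℂ)) * V)).trace.re
      = ∑ i, ∑ j, e i * f j * Complex.normSq ((U * Vᴴ) i j) := by
  rw [← re_trace_diagonal_mul_mul_diagonal_mul_conjTranspose, conjTranspose_mul,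
    conjTranspose_conjTranspose]
  simp only [Matrix.mul_assoc]
  rw [trace_mul_comm]
  simp only [Matrix.mul_assoc]

theorem isHermitian_conjTranspose_mul_diagonal_ofReal_mul (U : Matrix ι ι ℂ) (e : ι → ℝ) :
    (Uᴴ * diagonal (fun i => (e i : ℂ)) * U).IsHermitian :=
  isHermitian_conjTranspose_mul_mul U <| isHermitian_diagonal_of_self_adjoint _ <| by
    ext i; simp

end Matrix

open Matrix

theorem frobSq_sub_of_isHermitian {n : ℕ} {A B : Matrix (Fin n) (Fin n) ℂ} (hA : A.IsHermitian)
    (hB : B.IsHermitian) :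
    frobSq (A - B) = (A * A).trace.re - 2 * (A * B).trace.re + (B * B).trace.re := by
  rw [frobSq, conjTranspose_sub, hA.eq, hB.eq, sub_mul, mul_sub, mul_sub, trace_sub, trace_sub,
    trace_sub, trace_mul_comm B A]
  simp only [Complex.sub_re]
  ring

theorem frobSq_conj_diagonal_sub_conj_diagonal {n : ℕ} {U V : Matrix (Fin n) (Fin n) ℂ}
    (hU : U ∈ unitaryGroup (Fin n) ℂ) (hV : V ∈ unitaryGroup (Fin n) ℂ) (e f : Fin n → ℝ) :
    frobSq (Uᴴ * diagonal (fun i => (e i : ℂ)) * U - Vᴴ * diagonal (fun j => (f j : ℂ)) * V)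
      = ∑ i, e i ^ 2 - 2 * ∑ i, ∑ j, e i * f j * Complex.normSq ((U * Vᴴ) i j) + ∑ j, f j ^ 2 := by
  rw [frobSq_sub_of_isHermitian (isHermitian_conjTranspose_mul_diagonal_ofReal_mul U e)
    (isHermitian_conjTranspose_mul_diagonal_ofReal_mul V f),
    re_trace_conj_diagonal_mul_conj_diagonal, re_trace_conj_diagonal_mul_conj_diagonal,
    re_trace_conj_diagonal_mul_conj_diagonal, ← star_eq_conjTranspose, ← star_eq_conjTranspose,
    Unitary.mul_star_self_of_mem hU, Unitary.mul_star_self_of_mem hV]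
  simp [one_apply, apply_ite, sq]

theorem frobSq_conj_diagonal_sub_conj_diagonal_self {n : ℕ} {U : Matrix (Fin n) (Fin n) ℂ}
    (hU : U ∈ unitaryGroup (Fin n) ℂ) (e f : Fin n → ℝ) :
    frobSq (Uᴴ * diagonal (fun i => (e i : ℂ)) * U - Uᴴ * diagonal (fun j => (f j : ℂ)) * U)
      = ∑ i, (e i - f i) ^ 2 := by
  rw [frobSq_conj_diagonal_sub_conj_diagonal hU hU, ← star_eq_conjTranspose,
    Unitary.mul_star_self_of_mem hU]
  simp [one_apply, apply_ite, sub_sq, Finset.sum_add_distrib, Finset.sum_sub_distrib,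
    Finset.mul_sum, mul_assoc]

theorem sum_sq_sub_ite_le_frobSq_conj_diagonal_sub_conj_diagonal {n : ℕ}
    {U V : Matrix (Fin n) (Fin n) ℂ} (hU : U ∈ unitaryGroup (Fin n) ℂ)
    (hV : V ∈ unitaryGroup (Fin n) ℂ) {a : Fin n → ℝ} {i₀ : Fin n} (ha : ∀ i, a i ≤ a i₀)
    {d₁ d₂ : ℝ} (hd : d₂ ≤ d₁) :
    ∑ i, (a i - if i = i₀ then d₁ else d₂) ^ 2
      ≤ frobSq (Uᴴ * diagonal (fun i => (a i : ℂ)) * U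
          - Vᴴ * diagonal (fun j => ((if j = i₀ then d₁ else d₂ : ℝ) : ℂ)) * V) := by
  have hcross := sum_sum_mul_ite_mul_le_of_mem_doublyStochastic
    (map_normSq_mem_doublyStochastic (mul_mem hU (Unitary.star_mem hV))) ha hd
  simp only [map_apply, star_eq_conjTranspose] at hcross
  rw [frobSq_conj_diagonal_sub_conj_diagonal hU hV]
  simp only [sub_sq, Finset.sum_add_distrib, Finset.sum_sub_distrib, mul_assoc, ← Finset.mul_sum]
    at hcross ⊢
  linarith

theorem depolariser_filter_optimal_general (U : Matrix (Fin 4) (Fin 4) ℂ)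
    (hU : U ∈ Matrix.unitaryGroup (Fin 4) ℂ) (a : Fin 4 → ℝ) (ha : Antitone a)
    (A : Matrix (Fin 4) (Fin 4) ℂ)
    (hA : A = Uᴴ * Matrix.diagonal (fun i => (a i : ℂ)) * U) :
    ∀ (V : Matrix (Fin 4) (Fin 4) ℂ), V ∈ Matrix.unitaryGroup (Fin 4) ℂ →
    ∀ d₁ d₂ : ℝ, d₂ ≤ d₁ → 0 ≤ d₂ →
      frobSq (A - Uᴴ * Matrix.diagonal
          (fun i => (if i = 0 then (a 0 : ℂ) else (((a 1 + a 2 + a 3) / 3 : ℝ) : ℂ))) * U)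
        ≤ frobSq (A - Vᴴ * Matrix.diagonal
          (fun i => (if i = 0 then (d₁ : ℂ) else (d₂ : ℂ))) * V) := by
  intro V hV d₁ d₂ hd _
  set b : Fin 4 → ℝ := fun i => if i = 0 then a 0 else (a 1 + a 2 + a 3) / 3
  set d : Fin 4 → ℝ := fun i => if i = 0 then d₁ else d₂
  rw [hA, show (fun i : Fin 4 => if i = 0 then (a 0 : ℂ) else (((a 1 + a 2 + a 3) / 3 : ℝ) : ℂ))
      = fun i => (b i : ℂ) from funext fun i => (apply_ite _ _ _ _).symm,
    show (fun i : Fin 4 => if i = 0 then (d₁ : ℂ) else (d₂ : ℂ))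
      = fun i => (d i : ℂ) from funext fun i => (apply_ite _ _ _ _).symm]
  calc _ = ∑ i, (a i - b i) ^ 2 := frobSq_conj_diagonal_sub_conj_diagonal_self hU a b
    _ ≤ ∑ i, (a i - d i) ^ 2 := by
      simp only [Fin.sum_univ_four, b, d, Fin.reduceEq, if_true, if_false]
      nlinarith [sq_nonneg (a 0 - d₁), sq_nonneg (a 1 + a 2 + a 3 - 3 * d₂)]
    _ ≤ _ := sum_sq_sub_ite_le_frobSq_conj_diagonal_sub_conj_diagonal hU hV
      (fun i => ha (Fin.zero_le i)) hd

/-- best approximation of `A = Uᴴ[a]U` (with `a₁ ≥ a₂ ≥ a₃ ≥ a₄ ≥ 0`)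
among coherency matrices `Vᴴ[d₁,d₂,d₂,d₂]V` with `d₁ ≥ d₂ ≥ 0` is obtained with the same
eigenvectors, `b = (a₁, c, c, c)` and `c = (a₂+a₃+a₄)/3`. -/
theorem depolariser_filter_optimal (U : Matrix (Fin 4) (Fin 4) ℂ)
    (hU : U ∈ Matrix.unitaryGroup (Fin 4) ℂ) (a : Fin 4 → ℝ) (ha : Antitone a)
    (hnn : ∀ i, 0 ≤ a i) (A : Matrix (Fin 4) (Fin 4) ℂ)
    (hA : A = Uᴴ * Matrix.diagonal (fun i => (a i : ℂ)) * U) :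
    ∀ (V : Matrix (Fin 4) (Fin 4) ℂ), V ∈ Matrix.unitaryGroup (Fin 4) ℂ →
    ∀ d₁ d₂ : ℝ, d₂ ≤ d₁ → 0 ≤ d₂ →
      frobSq (A - Uᴴ * Matrix.diagonal
          (fun i => (if i = 0 then (a 0 : ℂ) else (((a 1 + a 2 + a 3) / 3 : ℝ) : ℂ))) * U)
        ≤ frobSq (A - Vᴴ * Matrix.diagonal
          (fun i => (if i = 0 then (d₁ : ℂ) else (d₂ : ℂ))) * V) :=
  depolariser_filter_optimal_general U hU a ha A hA
end

section
/- (Weyl's inequality, simplified) Let A, B, C be Hermitian n×n matrices with A + B = C, and let a₁ ≥ … ≥ aₙ, b₁ ≥ … ≥ bₙ, c₁ ≥ … ≥ cₙ be their eigenvalues. Then aᵢ + bₙ ≤ cᵢ ≤ aᵢ + b₁ for all 1 ≤ i ≤ n. -/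
/-!
Choose a nonzero `x` with `(U x)_j = 0` for `j < i` and `(W x)_j = 0` for `j > i`: these are only
`n - 1` linear conditions on `n` unknowns. Unitarity turns `x* A x` into the average of `a` with
weights `|(U x)_j|²` of total mass `|x|²`, so `x* A x ≤ aᵢ |x|²`; likewise `x* B x ≤ b₁ |x|²` and
`cᵢ |x|² ≤ x* C x`, and `A + B = C` gives `cᵢ ≤ aᵢ + b₁`. The lower bound is the same argument for
`-A`, `-B`, `-C`, whose eigenvalues are decreasing for the reversed order of the indices.
-/

open Matrix
open scoped ComplexOrder

theorem Matrix.exists_ne_zero_mulVec_apply_eq_zero {ι K : Type*} [Fintype ι] [LinearOrder ι]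
    [Field K] (M N : Matrix ι ι K) (i : ι) :
    ∃ x ≠ 0, (∀ j < i, (M *ᵥ x) j = 0) ∧ ∀ j, i < j → (N *ᵥ x) j = 0 := by
  classical
  let f : (ι → K) →ₗ[K] ({j // j ≠ i} → K) := LinearMap.pi fun j =>
    if (j : ι) < i then LinearMap.proj (j : ι) ∘ₗ M.mulVecLin
    else LinearMap.proj (j : ι) ∘ₗ N.mulVecLin
  have hcard : Fintype.card {j // j ≠ i} < Fintype.card ι :=
    Fintype.card_subtype_lt (p := (· ≠ i)) (x := i) (by simp)
  obtain ⟨x, hx, hx0⟩ := (Submodule.ne_bot_iff _).mp (LinearMap.ker_ne_bot_of_finrank_lt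
    (f := f) (by simpa only [Module.finrank_fintype_fun_eq_card] using hcard))
  refine ⟨x, hx0, fun j hj => ?_, fun j hj => ?_⟩
  · simpa [f, hj] using congrFun (LinearMap.mem_ker.mp hx) ⟨j, hj.ne⟩
  · simpa [f, hj.not_gt] using congrFun (LinearMap.mem_ker.mp hx) ⟨j, hj.ne'⟩

section

variable {ι : Type*} [Fintype ι]

theorem sum_mul_le_mul_sum_of_antitone [LinearOrder ι] {d w : ι → ℝ} (hd : Antitone d)
    (hw : 0 ≤ w) {i : ι} (hzero : ∀ j < i, w j = 0) : ∑ j, d j * w j ≤ d i * ∑ j, w j := by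
  rw [Finset.mul_sum]
  refine Finset.sum_le_sum fun j _ => ?_
  rcases lt_or_ge j i with hji | hij
  · simp [hzero j hji]
  · exact mul_le_mul_of_nonneg_right (hd hij) (hw j)

theorem mul_sum_le_sum_mul_of_antitone [LinearOrder ι] {d w : ι → ℝ} (hd : Antitone d)
    (hw : 0 ≤ w) {i : ι} (hzero : ∀ j, i < j → w j = 0) : d i * ∑ j, w j ≤ ∑ j, d j * w j := by
  have h := sum_mul_le_mul_sum_of_antitone (ι := ιᵒᵈ) (d := fun j => -d (OrderDual.ofDual j))
    (w := w) (fun j k hjk => neg_le_neg (hd hjk)) hw (i := OrderDual.toDual i) hzero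
  simp only [Finset.sum_neg_distrib, neg_mul, neg_le_neg_iff] at h
  exact h

theorem sum_normSq_pos {x : ι → ℂ} (hx : x ≠ 0) : 0 < ∑ j, Complex.normSq (x j) := by
  obtain ⟨j, hj⟩ := Function.ne_iff.mp hx
  exact Finset.sum_pos' (fun k _ => Complex.normSq_nonneg _)
    ⟨j, Finset.mem_univ j, Complex.normSq_pos.mpr hj⟩

variable [DecidableEq ι]

theorem Matrix.star_dotProduct_conjTranspose_diagonal_mul_mulVec (U : Matrix ι ι ℂ)
    (d : ι → ℝ) (x : ι → ℂ) :
    star x ⬝ᵥ ((Uᴴ * diagonal (fun j => (d j : ℂ)) * U) *ᵥ x)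
      = ↑(∑ j, d j * Complex.normSq ((U *ᵥ x) j)) := by
  rw [Matrix.mul_assoc, ← mulVec_mulVec, dotProduct_mulVec, ← star_mulVec, ← mulVec_mulVec]
  simp only [dotProduct, mulVec_diagonal, Pi.star_apply, Complex.ofReal_sum, Complex.ofReal_mul,
    Complex.normSq_eq_conj_mul_self, Complex.star_def]
  exact Finset.sum_congr rfl fun j _ => by ring

theorem Matrix.sum_normSq_mulVec_of_mem_unitaryGroup {U : Matrix ι ι ℂ}
    (hU : U ∈ unitaryGroup ι ℂ) (x : ι → ℂ) :
    ∑ j, Complex.normSq ((U *ᵥ x) j) = ∑ j, Complex.normSq (x j) := by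
  have hU' := star_dotProduct_conjTranspose_diagonal_mul_mulVec U 1 x
  have h1 := star_dotProduct_conjTranspose_diagonal_mul_mulVec 1 1 x
  simp only [Pi.one_apply, Complex.ofReal_one, diagonal_one, Matrix.mul_one, one_mul,
    conjTranspose_one, one_mulVec] at hU' h1
  rw [← star_eq_conjTranspose, hU.1, one_mulVec] at hU'
  exact_mod_cast hU'.symm.trans h1

theorem weyl_upper_bound [LinearOrder ι] {U V W : Matrix ι ι ℂ}
    (hU : U ∈ unitaryGroup ι ℂ) (hV : V ∈ unitaryGroup ι ℂ) (hW : W ∈ unitaryGroup ι ℂ)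
    {a b c : ι → ℝ} {β : ℝ} (ha : Antitone a) (hb : ∀ j, b j ≤ β) (hc : Antitone c)
    (hsum : Uᴴ * diagonal (fun j => (a j : ℂ)) * U + Vᴴ * diagonal (fun j => (b j : ℂ)) * V
      = Wᴴ * diagonal (fun j => (c j : ℂ)) * W) (i : ι) :
    c i ≤ a i + β := by
  obtain ⟨x, hx0, hUx, hWx⟩ := exists_ne_zero_mulVec_apply_eq_zero U W i
  set N := ∑ j, Complex.normSq (x j) with hN
  have hform : ∑ j, a j * Complex.normSq ((U *ᵥ x) j) + ∑ j, b j * Complex.normSq ((V *ᵥ x) j)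
      = ∑ j, c j * Complex.normSq ((W *ᵥ x) j) := by
    have h := congrArg (fun M => star x ⬝ᵥ (M *ᵥ x)) hsum
    simp only [add_mulVec, dotProduct_add, star_dotProduct_conjTranspose_diagonal_mul_mulVec] at h
    exact_mod_cast h
  have hA : ∑ j, a j * Complex.normSq ((U *ᵥ x) j) ≤ a i * N := by
    rw [hN, ← sum_normSq_mulVec_of_mem_unitaryGroup hU x]
    exact sum_mul_le_mul_sum_of_antitone ha (fun _ => Complex.normSq_nonneg _)
      fun j hj => by simp [hUx j hj]
  have hB : ∑ j, b j * Complex.normSq ((V *ᵥ x) j) ≤ β * N := by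
    rw [hN, ← sum_normSq_mulVec_of_mem_unitaryGroup hV x, Finset.mul_sum]
    exact Finset.sum_le_sum fun j _ => mul_le_mul_of_nonneg_right (hb j) (Complex.normSq_nonneg _)
  have hC : c i * N ≤ ∑ j, c j * Complex.normSq ((W *ᵥ x) j) := by
    rw [hN, ← sum_normSq_mulVec_of_mem_unitaryGroup hW x]
    exact mul_sum_le_sum_mul_of_antitone hc (fun _ => Complex.normSq_nonneg _)
      fun j hj => by simp [hWx j hj]
  exact le_of_mul_le_mul_right (by rw [add_mul]; linarith) (sum_normSq_pos hx0)

end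

/-- Weyl's inequality, simplified: if `A + B = C` are Hermitian with
decreasing eigenvalue vectors `a`, `b`, `c`, then `aᵢ + bₙ ≤ cᵢ ≤ aᵢ + b₁` for all `i`. -/
theorem weyl_inequality_simplified {n : ℕ}
    (U V W : Matrix (Fin (n + 1)) (Fin (n + 1)) ℂ)
    (hU : U ∈ Matrix.unitaryGroup (Fin (n + 1)) ℂ)
    (hV : V ∈ Matrix.unitaryGroup (Fin (n + 1)) ℂ)
    (hW : W ∈ Matrix.unitaryGroup (Fin (n + 1)) ℂ)
    (a b c : Fin (n + 1) → ℝ) (ha : Antitone a) (hb : Antitone b) (hc : Antitone c)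
    (A B C : Matrix (Fin (n + 1)) (Fin (n + 1)) ℂ)
    (hA : A = Uᴴ * Matrix.diagonal (fun i => (a i : ℂ)) * U)
    (hB : B = Vᴴ * Matrix.diagonal (fun i => (b i : ℂ)) * V)
    (hC : C = Wᴴ * Matrix.diagonal (fun i => (c i : ℂ)) * W)
    (hsum : A + B = C) :
    ∀ i, a i + b (Fin.last n) ≤ c i ∧ c i ≤ a i + b 0 := by
  subst hA hB hC
  intro i
  have hsum_neg : Uᴴ * diagonal (fun j => ((-a j : ℝ) : ℂ)) * U
      + Vᴴ * diagonal (fun j => ((-b j : ℝ) : ℂ)) * V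
      = Wᴴ * diagonal (fun j => ((-c j : ℝ) : ℂ)) * W := by
    simp only [Complex.ofReal_neg, ← diagonal_neg, Matrix.mul_neg, Matrix.neg_mul, ← neg_add, hsum]
  have lower : a i ≤ c i - b (Fin.last n) := by
    simpa [neg_add_eq_sub] using weyl_upper_bound (ι := (Fin (n + 1))ᵒᵈ) hU hV hW
      (β := -b (Fin.last n)) (fun j k hjk => neg_le_neg (ha hjk))
      (fun j => neg_le_neg (hb (Fin.le_last _))) (fun j k hjk => neg_le_neg (hc hjk)) hsum_neg i
  exact ⟨by linarith, weyl_upper_bound hU hV hW ha (fun j => hb (Fin.zero_le j)) hc hsum i⟩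
end
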